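/- arXiv:2511.05963 — 3 statements merged into one kernel-verified Lean document; each statement's English description precedes it below -/
import Mathlib

section
/- Fix k with 1 ≤ k ≤ T−2. If h_{k+1} is a belief state for X_{1:k+1}, next-token consistency holds at time k, and transition consistency holds at time k, then h_k is a belief state for X_{1:k}. -/
/-!
Split a bounded function of the future tokens `X_{k+1:T}` according to the value `a` of the next
token and let `G` be the remaining function of `X_{k+2:T}`. On `{X_{k+1} = a}` condition on
`X_{1:k+1}` first: as `h_{k+1}` is a belief state, `E[G | X_{1:k+1}]` is a function `v` of `h_{k+1}`;
transition consistency, extended from indicators to bounded functions of `h_{k+1}`, makes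
`E[v | X_{1:k+1}]` a function of `(h_k, X_{k+1})`, i.e. a function `u` of `h_k` on `{X_{k+1} = a}`.
Hence `E[1_{X_{k+1} = a} G | X_{1:k}] = u · P(X_{k+1} = a | X_{1:k}) = u · P(X_{k+1} = a | h_k)` by
next-token consistency. This is `σ(h_k)`-measurable, so by the tower property it is also the
conditional expectation given `h_k`.
-/

open MeasureTheory ProbabilityTheory

noncomputable section

/-- The tuple of tokens `(X_{s+1}, …, X_{s+n})`. -/
def tup {Ω 𝒳 : Type*} (X : ℕ → Ω → 𝒳) (s n : ℕ) (ω : Ω) : Fin n → 𝒳 :=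
  fun i => X (s + 1 + (i : ℕ)) ω

/-- Real-valued indicator of a set. -/
def ind {Ω : Type*} (A : Set Ω) : Ω → ℝ := A.indicator 1

open Filter Topology
open scoped NNReal

section ConditionalExpectation

variable {Ω : Type*} {m0 : MeasurableSpace Ω} {μ : Measure Ω} [IsFiniteMeasure μ]

theorem condExp_ae_eq_condExp_of_aestronglyMeasurable {m n : MeasurableSpace Ω}
    (hmn : m ≤ n) (hn : n ≤ m0) {F : Ω → ℝ} (hF : AEStronglyMeasurable[m] (μ[F|n]) μ) :
    μ[F|m] =ᵐ[μ] μ[F|n] :=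
  (condExp_condExp_of_le hmn hn).symm.trans
    (condExp_of_aestronglyMeasurable' (hmn.trans hn) hF integrable_condExp)

theorem condExp_indicator_ae_eq_condExp_indicator_condExp {n n' : MeasurableSpace Ω}
    (hnn' : n ≤ n') (hn' : n' ≤ m0) {s : Set Ω} (hs : MeasurableSet[n'] s) {Z : Ω → ℝ}
    (hZ : Integrable Z μ) :
    μ[s.indicator Z|n] =ᵐ[μ] μ[s.indicator (μ[Z|n'])|n] :=
  (condExp_condExp_of_le hnn' hn').symm.trans (condExp_congr_ae (condExp_indicator hZ hs))

theorem condExp_ae_eq_condExp_of_tendsto {m₁ m₂ : MeasurableSpace Ω} (hm₁ : m₁ ≤ m0)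
    (hm₂ : m₂ ≤ m0) {fs : ℕ → Ω → ℝ} {f : Ω → ℝ} {C : ℝ}
    (hfs_meas : ∀ n, AEStronglyMeasurable[m0] (fs n) μ) (hfs_bound : ∀ n, ∀ᵐ ω ∂μ, ‖fs n ω‖ ≤ C)
    (hfs : ∀ᵐ ω ∂μ, Tendsto (fun n => fs n ω) atTop (𝓝 (f ω)))
    (heq : ∀ n, μ[fs n|m₁] =ᵐ[μ] μ[fs n|m₂]) :
    μ[f|m₁] =ᵐ[μ] μ[f|m₂] := by
  have hlim₁ := tendsto_condExpL1_of_dominated_convergence hm₁ (fun _ => C) hfs_meas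
    (integrable_const C) hfs_bound hfs
  have hlim₂ := tendsto_condExpL1_of_dominated_convergence hm₂ (fun _ => C) hfs_meas
    (integrable_const C) hfs_bound hfs
  have heqL1 : ∀ n, condExpL1 hm₁ μ (fs n) = condExpL1 hm₂ μ (fs n) := fun n =>
    Lp.ext ((condExp_ae_eq_condExpL1 hm₁ _).symm.trans
      ((heq n).trans (condExp_ae_eq_condExpL1 hm₂ _)))
  simp only [heqL1] at hlim₁
  refine (condExp_ae_eq_condExpL1 hm₁ f).trans ?_
  rw [tendsto_nhds_unique hlim₁ hlim₂]
  exact (condExp_ae_eq_condExpL1 hm₂ f).symm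

theorem condExp_simpleFunc_ae_eq_of_indicator {m₁ m₂ m' : MeasurableSpace Ω} (hm' : m' ≤ m0)
    (hind : ∀ s, MeasurableSet[m'] s → μ[ind s|m₁] =ᵐ[μ] μ[ind s|m₂])
    (φ : @SimpleFunc Ω m' ℝ) : μ[φ|m₁] =ᵐ[μ] μ[φ|m₂] := by
  induction φ using SimpleFunc.induction with
  | @const c t ht =>
    classical
    have h : t.piecewise (Function.const Ω c) (Function.const Ω 0) = c • ind t := by
      ext ω
      by_cases hω : ω ∈ t <;> simp [ind, hω]
    rw [SimpleFunc.coe_piecewise, SimpleFunc.coe_const, SimpleFunc.coe_const, h]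
    exact (condExp_smul c _ m₁).trans (((hind t ht).const_smul c).trans (condExp_smul c _ m₂).symm)
  | @add f g hdisj hf hg =>
    rw [SimpleFunc.coe_add]
    have hint (ψ : @SimpleFunc Ω m' ℝ) : Integrable ψ μ :=
      have ⟨C, hC⟩ := ψ.exists_forall_norm_le
      .of_bound ((ψ.stronglyMeasurable.mono hm').aestronglyMeasurable) C (.of_forall hC)
    exact (condExp_add (hint f) (hint g) m₁).trans
      ((hf.add hg).trans (condExp_add (hint f) (hint g) m₂).symm)

theorem condExp_ae_eq_condExp_of_indicator {m₁ m₂ m' : MeasurableSpace Ω} (hm₁ : m₁ ≤ m0)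
    (hm₂ : m₂ ≤ m0) (hm' : m' ≤ m0)
    (hind : ∀ s, MeasurableSet[m'] s → μ[ind s|m₁] =ᵐ[μ] μ[ind s|m₂])
    {V : Ω → ℝ} (hV : StronglyMeasurable[m'] V) {C : ℝ≥0} (hVC : ∀ᵐ ω ∂μ, |V ω| ≤ C) :
    μ[V|m₁] =ᵐ[μ] μ[V|m₂] :=
  condExp_ae_eq_condExp_of_tendsto hm₁ hm₂
    (fun n => ((hV.approxBounded C n).stronglyMeasurable.mono hm').aestronglyMeasurable)
    (fun n => .of_forall (hV.norm_approxBounded_le C.coe_nonneg n))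
    (hV.tendsto_approxBounded_ae hVC)
    (fun _ => condExp_simpleFunc_ae_eq_of_indicator hm' hind _)

end ConditionalExpectation

section InductionStep

variable {Ω H 𝒳 𝒵 : Type*} {n n₁ m₁ m0 : MeasurableSpace Ω}
  [MeasurableSpace H] [MeasurableSpace 𝒳] [MeasurableSpace 𝒵] {μ : Measure Ω} [IsFiniteMeasure μ]
  {η : Ω → H} {Y : Ω → 𝒳}

theorem condExp_indicator_ae_eq_of_consistency [MeasurableSingletonClass 𝒳]
    (hη : Measurable η) (hηn : MeasurableSpace.comap η inferInstance ≤ n) (hnn₁ : n ≤ n₁)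
    (hn₁ : n₁ ≤ m0) (hY : Measurable[n₁] Y) (hm₁ : m₁ ≤ m0) (a : 𝒳) {G : Ω → ℝ}
    (hG : Integrable G μ) {C : ℝ≥0} (hGC : ∀ᵐ ω ∂μ, |G ω| ≤ C)
    (hbelief : μ[G|m₁] =ᵐ[μ] μ[G|n₁])
    (hnext : μ[ind {ω | Y ω = a}|MeasurableSpace.comap η inferInstance]
      =ᵐ[μ] μ[ind {ω | Y ω = a}|n])
    (htrans : ∀ s, MeasurableSet[m₁] s →
      μ[ind s|MeasurableSpace.comap (fun ω => (η ω, Y ω)) inferInstance] =ᵐ[μ] μ[ind s|n₁]) :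
    μ[{ω | Y ω = a}.indicator G|MeasurableSpace.comap η inferInstance]
      =ᵐ[μ] μ[{ω | Y ω = a}.indicator G|n] := by
  set A := {ω | Y ω = a}
  have hA : MeasurableSet[n₁] A := hY (measurableSet_singleton a)
  have hηY : MeasurableSpace.comap (fun ω => (η ω, Y ω)) inferInstance ≤ m0 :=
    (hη.prodMk (hY.mono hn₁ le_rfl)).comap_le
  set v := μ[G|m₁]
  set w := μ[v|MeasurableSpace.comap (fun ω => (η ω, Y ω)) inferInstance]
  have hw : w =ᵐ[μ] μ[v|n₁] := condExp_ae_eq_condExp_of_indicator hηY hn₁ hm₁ htrans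
    stronglyMeasurable_condExp (ae_bdd_abs_condExp_of_ae_bdd_abs hGC)
  obtain ⟨ψ, hψ, hψw⟩ := stronglyMeasurable_condExp.exists_eq_measurable_comp (g := w)
  set u := fun ω => ψ (η ω, a)
  have hu : StronglyMeasurable[MeasurableSpace.comap η inferInstance] u :=
    (hψ.comp_measurable measurable_prodMk_right).comp_measurable (comap_measurable η)
  -- Doob–Dynkin: `w = ψ ∘ (η, Y)`, which on `A = {Y = a}` is the function `u` of `η` alone
  have hu_eq : A.indicator w = u * ind A := by
    ext ω
    by_cases hω : Y ω = a <;> simp [A, u, ind, hψw, hω]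
  have key : μ[A.indicator G|n] =ᵐ[μ] u * μ[ind A|n] := calc
    μ[A.indicator G|n] =ᵐ[μ] μ[A.indicator (μ[G|n₁])|n] :=
      condExp_indicator_ae_eq_condExp_indicator_condExp hnn₁ hn₁ hA hG
    _ =ᵐ[μ] μ[A.indicator v|n] := condExp_congr_ae (hbelief.symm.indicator)
    _ =ᵐ[μ] μ[A.indicator (μ[v|n₁])|n] :=
      condExp_indicator_ae_eq_condExp_indicator_condExp hnn₁ hn₁ hA integrable_condExp
    _ =ᵐ[μ] μ[u * ind A|n] := condExp_congr_ae (hw.symm.indicator.trans (.of_eq hu_eq))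
    _ =ᵐ[μ] u * μ[ind A|n] := condExp_mul_of_stronglyMeasurable_left (hu.mono hηn)
      (hu_eq ▸ integrable_condExp.indicator (hn₁ _ hA)) ((integrable_const 1).indicator (hn₁ _ hA))
  refine condExp_ae_eq_condExp_of_aestronglyMeasurable hηn (hnn₁.trans hn₁) ?_
  exact (hu.aestronglyMeasurable.mul
    (stronglyMeasurable_condExp.aestronglyMeasurable.congr hnext)).congr key.symm

theorem condExp_comap_ae_eq_of_consistency [Fintype 𝒳] [MeasurableSingletonClass 𝒳] {Z : Ω → 𝒵}
    (hη : Measurable η) (hηn : MeasurableSpace.comap η inferInstance ≤ n) (hnn₁ : n ≤ n₁)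
    (hn₁ : n₁ ≤ m0) (hY : Measurable[n₁] Y) (hZ : Measurable Z) (hm₁ : m₁ ≤ m0)
    (hbelief : ∀ φ : 𝒵 → ℝ, Measurable φ → (∃ C, ∀ z, |φ z| ≤ C) →
      μ[fun ω => φ (Z ω)|m₁] =ᵐ[μ] μ[fun ω => φ (Z ω)|n₁])
    (hnext : ∀ a : 𝒳, μ[ind {ω | Y ω = a}|MeasurableSpace.comap η inferInstance]
      =ᵐ[μ] μ[ind {ω | Y ω = a}|n])
    (htrans : ∀ s, MeasurableSet[m₁] s →
      μ[ind s|MeasurableSpace.comap (fun ω => (η ω, Y ω)) inferInstance] =ᵐ[μ] μ[ind s|n₁])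
    {φ : 𝒳 × 𝒵 → ℝ} (hφ : Measurable φ) {C : ℝ} (hC : ∀ x, |φ x| ≤ C) :
    μ[fun ω => φ (Y ω, Z ω)|MeasurableSpace.comap η inferInstance]
      =ᵐ[μ] μ[fun ω => φ (Y ω, Z ω)|n] := by
  classical
  have hdecomp : (fun ω => φ (Y ω, Z ω))
      = ∑ a, {ω | Y ω = a}.indicator (fun ω => φ (a, Z ω)) := by
    ext ω
    simp [Finset.sum_apply, Set.indicator_apply]
  have hG_meas (a : 𝒳) : Measurable fun ω => φ (a, Z ω) := hφ.comp (measurable_const.prodMk hZ)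
  have hG_int (a : 𝒳) : Integrable (fun ω => φ (a, Z ω)) μ :=
    .of_bound (hG_meas a).aestronglyMeasurable C (.of_forall fun _ => hC _)
  have hG_bdd (a : 𝒳) : ∀ᵐ ω ∂μ, |φ (a, Z ω)| ≤ C.toNNReal :=
    .of_forall fun _ => (hC _).trans (Real.le_coe_toNNReal C)
  have hA (a : 𝒳) : MeasurableSet {ω | Y ω = a} := hY.mono hn₁ le_rfl (measurableSet_singleton a)
  have hint : ∀ a ∈ Finset.univ, Integrable ({ω | Y ω = a}.indicator fun ω => φ (a, Z ω)) μ :=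
    fun a _ => (hG_int a).indicator (hA a)
  rw [hdecomp]
  refine (condExp_finsetSum hint _).trans (.trans ?_ (condExp_finsetSum hint _).symm)
  exact eventuallyEq_sum fun a _ => condExp_indicator_ae_eq_of_consistency hη hηn hnn₁ hn₁ hY hm₁
    a (hG_int a) (hG_bdd a) (hbelief _ (hφ.comp measurable_prodMk_left) ⟨C, fun _ => hC _⟩)
    (hnext a) htrans

end InductionStep

theorem measurable_finCons {α : Type*} [MeasurableSpace α] {n : ℕ} :
    Measurable fun p : α × (Fin n → α) => (Fin.cons p.1 p.2 : Fin (n + 1) → α) :=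
  measurable_pi_iff.2 fun i => Fin.cases measurable_fst
    (fun j => by simp only [Fin.cons_succ]; exact (measurable_pi_apply j).comp measurable_snd) i

section Tuples

variable {Ω 𝒳 : Type*} (X : ℕ → Ω → 𝒳)

theorem tup_succ (s n : ℕ) (ω : Ω) :
    tup X s (n + 1) ω = Fin.cons (X (s + 1) ω) (tup X (s + 1) n ω) := by
  funext i
  refine Fin.cases rfl (fun j => ?_) i
  simp only [tup, Fin.cons_succ, Fin.val_succ]
  congr 1
  omega

variable [MeasurableSpace 𝒳]

theorem comap_tup_mono (s : ℕ) {n n' : ℕ} (hnn' : n ≤ n') :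
    MeasurableSpace.comap (tup X s n) inferInstance
      ≤ MeasurableSpace.comap (tup X s n') inferInstance := by
  have : Measurable[MeasurableSpace.comap (tup X s n') inferInstance] (tup X s n) :=
    @measurable_pi_lambda _ _ _ (_) _ _ fun i =>
      (measurable_pi_apply (Fin.castLE hnn' i)).comp (comap_measurable (tup X s n'))
  exact this.comap_le

theorem measurable_comap_tup {s n j : ℕ} (hsj : s < j) (hjn : j ≤ s + n) :
    Measurable[MeasurableSpace.comap (tup X s n) inferInstance] (X j) := by
  obtain ⟨i, rfl⟩ : ∃ i, j = s + 1 + i := ⟨j - (s + 1), by omega⟩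
  exact (measurable_pi_apply (X := fun _ : Fin n => 𝒳) ⟨i, by omega⟩).comp
    (comap_measurable (tup X s n))

end Tuples

theorem induction_step_belief_state_general
    {Ω 𝒳 H : Type*}
    [MeasurableSpace Ω] [MeasurableSpace 𝒳] [DiscreteMeasurableSpace 𝒳]
    [Fintype 𝒳]
    [MeasurableSpace H]
    (μ : Measure Ω) [IsProbabilityMeasure μ]
    (T : ℕ)
    (X : ℕ → Ω → 𝒳) (hX : ∀ t, Measurable (X t))
    (h : ℕ → Ω → H) (g : (t : ℕ) → (Fin t → 𝒳) → H)
    (hg : ∀ t, 1 ≤ t → t ≤ T → Measurable (g t))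
    (hgh : ∀ t, 1 ≤ t → t ≤ T → ∀ ω, h t ω = g t (tup X 0 t ω))
    (k : ℕ) (hk1 : 1 ≤ k) (hk2 : k ≤ T - 2)
    -- `h (k+1)` is a belief state for `X_{1:k+1}`
    (hIH : ∀ f : (Fin (T - (k + 1)) → 𝒳) → ℝ, Measurable f → (∃ C, ∀ y, |f y| ≤ C) →
      (μ[fun ω => f (tup X (k + 1) (T - (k + 1)) ω) |
          MeasurableSpace.comap (h (k + 1)) inferInstance])
        =ᵐ[μ]
      (μ[fun ω => f (tup X (k + 1) (T - (k + 1)) ω) |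
          MeasurableSpace.comap (tup X 0 (k + 1)) inferInstance]))
    -- next-token consistency at time `k`
    (hnext : ∀ a : 𝒳,
      (μ[ind {ω | X (k + 1) ω = a} | MeasurableSpace.comap (h k) inferInstance])
        =ᵐ[μ]
      (μ[ind {ω | X (k + 1) ω = a} | MeasurableSpace.comap (tup X 0 k) inferInstance]))
    -- transition consistency at time `k`
    (htrans : ∀ B : Set H, MeasurableSet B →
      (μ[ind {ω | h (k + 1) ω ∈ B} |
          MeasurableSpace.comap (fun ω => (h k ω, X (k + 1) ω)) inferInstance])
        =ᵐ[μ]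
      (μ[ind {ω | h (k + 1) ω ∈ B} |
          MeasurableSpace.comap (tup X 0 (k + 1)) inferInstance])) :
    -- conclusion: `h k` is a belief state for `X_{1:k}`
    ∀ f : (Fin (T - k) → 𝒳) → ℝ, Measurable f → (∃ C, ∀ y, |f y| ≤ C) →
      (μ[fun ω => f (tup X k (T - k) ω) | MeasurableSpace.comap (h k) inferInstance])
        =ᵐ[μ]
      (μ[fun ω => f (tup X k (T - k) ω) |
          MeasurableSpace.comap (tup X 0 k) inferInstance]) := by
  have hkT : k ≤ T := by omega
  have hk1T : k + 1 ≤ T := by omega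
  have htup (s n : ℕ) : Measurable (tup X s n) := measurable_pi_lambda _ fun _ => hX _
  have hh (t : ℕ) (h1 : 1 ≤ t) (hT : t ≤ T) : h t = g t ∘ tup X 0 t := funext (hgh t h1 hT)
  have hhk : Measurable (h k) := hh k hk1 hkT ▸ (hg k hk1 hkT).comp (htup 0 k)
  have hmk : MeasurableSpace.comap (h k) inferInstance
      ≤ MeasurableSpace.comap (tup X 0 k) inferInstance := by
    rw [hh k hk1 hkT]
    exact ((hg k hk1 hkT).comp (comap_measurable _)).comap_le
  have hm₁ : MeasurableSpace.comap (h (k + 1)) inferInstance ≤ ‹_› := by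
    rw [hh (k + 1) (by omega) hk1T]
    exact ((hg _ (by omega) hk1T).comp (htup 0 (k + 1))).comap_le
  -- split `X_{k+1:T}` as `(X_{k+1}, X_{k+2:T})`
  rw [show T - k = T - (k + 1) + 1 by omega]
  generalize T - (k + 1) = n at hIH ⊢
  intro f hf ⟨C, hC⟩
  simp_rw [tup_succ]
  exact condExp_comap_ae_eq_of_consistency hhk hmk
    (comap_tup_mono X 0 k.le_succ) (htup 0 (k + 1)).comap_le
    (measurable_comap_tup X (by omega) (by omega)) (htup (k + 1) n) hm₁ hIH hnext
    (by rintro _ ⟨B, hB, rfl⟩; exact htrans B hB) (hf.comp measurable_finCons)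
    (fun _ => hC _)

/-- **induction step.** Fix `1 ≤ k ≤ T-2`. If `h (k+1)` is a belief state
for `X_{1:k+1}`, next-token consistency holds at time `k`, and transition consistency
holds at time `k`, then `h k` is a belief state for `X_{1:k}`. -/
theorem induction_step_belief_state
    {Ω 𝒳 H : Type*}
    [MeasurableSpace Ω] [MeasurableSpace 𝒳] [DiscreteMeasurableSpace 𝒳]
    [Fintype 𝒳] [Nonempty 𝒳]
    [MeasurableSpace H] [StandardBorelSpace H]
    (μ : Measure Ω) [IsProbabilityMeasure μ]
    (T : ℕ) (hT : 2 ≤ T)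
    (X : ℕ → Ω → 𝒳) (hX : ∀ t, Measurable (X t))
    (h : ℕ → Ω → H) (g : (t : ℕ) → (Fin t → 𝒳) → H)
    (hg : ∀ t, 1 ≤ t → t ≤ T → Measurable (g t))
    (hgh : ∀ t, 1 ≤ t → t ≤ T → ∀ ω, h t ω = g t (tup X 0 t ω))
    (k : ℕ) (hk1 : 1 ≤ k) (hk2 : k ≤ T - 2)
    -- `h (k+1)` is a belief state for `X_{1:k+1}`
    (hIH : ∀ f : (Fin (T - (k + 1)) → 𝒳) → ℝ, Measurable f → (∃ C, ∀ y, |f y| ≤ C) →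
      (μ[fun ω => f (tup X (k + 1) (T - (k + 1)) ω) |
          MeasurableSpace.comap (h (k + 1)) inferInstance])
        =ᵐ[μ]
      (μ[fun ω => f (tup X (k + 1) (T - (k + 1)) ω) |
          MeasurableSpace.comap (tup X 0 (k + 1)) inferInstance]))
    -- next-token consistency at time `k`
    (hnext : ∀ a : 𝒳,
      (μ[ind {ω | X (k + 1) ω = a} | MeasurableSpace.comap (h k) inferInstance])
        =ᵐ[μ]
      (μ[ind {ω | X (k + 1) ω = a} | MeasurableSpace.comap (tup X 0 k) inferInstance]))
    -- transition consistency at time `k`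
    (htrans : ∀ B : Set H, MeasurableSet B →
      (μ[ind {ω | h (k + 1) ω ∈ B} |
          MeasurableSpace.comap (fun ω => (h k ω, X (k + 1) ω)) inferInstance])
        =ᵐ[μ]
      (μ[ind {ω | h (k + 1) ω ∈ B} |
          MeasurableSpace.comap (tup X 0 (k + 1)) inferInstance])) :
    -- conclusion: `h k` is a belief state for `X_{1:k}`
    ∀ f : (Fin (T - k) → 𝒳) → ℝ, Measurable f → (∃ C, ∀ y, |f y| ≤ C) →
      (μ[fun ω => f (tup X k (T - k) ω) | MeasurableSpace.comap (h k) inferInstance])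
        =ᵐ[μ]
      (μ[fun ω => f (tup X k (T - k) ω) |
          MeasurableSpace.comap (tup X 0 k) inferInstance]) :=
  induction_step_belief_state_general μ T X hX h g hg hgh k hk1 hk2 hIH hnext htrans
end
end

section
/- Fix k with 1 ≤ k ≤ T−2. If h_{k+1} is a belief state for X_{1:k+1} and transition consistency holds at time k, then for every bounded measurable f : 𝒳^{T−k−1} → ℝ, E[f(X_{k+2:T}) ∣ σ(h_k, X_{k+1})] = E[f(X_{k+2:T}) ∣ σ(X_{1:k+1})] μ-almost surely. -/
/-!
Write `Z = f(X_{k+2:T})` and `W = E[Z | h_{k+1}]`. By the belief-state property `W` is also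
`E[Z | X_{1:k+1}]`. Since `h_{k+1}` is a function of `X_{1:k+1}`, it takes finitely many values
and `W = ψ(h_{k+1})` is a finite combination of the indicators of `{h_{k+1} = s}`; transition
consistency says these indicators have the same conditional expectation given `σ(h_k, X_{k+1})`
as given `σ(X_{1:k+1})`, hence so does `W`. As `σ(h_k, X_{k+1}) ≤ σ(X_{1:k+1})`, the tower
property gives `E[Z | h_k, X_{k+1}] = E[W | h_k, X_{k+1}] = E[W | X_{1:k+1}] = E[Z | X_{1:k+1}]`.
-/

open MeasureTheory ProbabilityTheory

noncomputable section

theorem measurable_tup {Ω 𝒳 : Type*} [MeasurableSpace Ω] [MeasurableSpace 𝒳]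
    {X : ℕ → Ω → 𝒳} (hX : ∀ t, Measurable (X t)) (s n : ℕ) :
    Measurable (tup X s n) :=
  measurable_pi_lambda _ fun _ => hX _

section

variable {Ω H : Type*} {m₁ m₂ m₀ : MeasurableSpace Ω} {μ : Measure[m₀] Ω}

theorem condExp_ae_eq_condExp_of_le_of_ae_eq (h₁₂ : m₁ ≤ m₂) (h₂ : m₂ ≤ m₀)
    [SigmaFinite (μ.trim h₂)] {Z W : Ω → ℝ} (hZW : μ[Z | m₂] =ᵐ[μ] W)
    (hW : μ[W | m₁] =ᵐ[μ] μ[W | m₂]) :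
    μ[Z | m₁] =ᵐ[μ] μ[Z | m₂] :=
  calc μ[Z | m₁]
      =ᵐ[μ] μ[μ[Z | m₂] | m₁] := (condExp_condExp_of_le h₁₂ h₂).symm
    _ =ᵐ[μ] μ[W | m₁] := condExp_congr_ae hZW
    _ =ᵐ[μ] μ[W | m₂] := hW
    _ =ᵐ[μ] μ[μ[Z | m₂] | m₂] := condExp_congr_ae hZW.symm
    _ =ᵐ[μ] μ[Z | m₂] := condExp_condExp_of_le le_rfl h₂

theorem exists_condExp_comap_eq_comp {β : Type*} [mβ : MeasurableSpace β] (μ : Measure[m₀] Ω)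
    (K : Ω → β) (Z : Ω → ℝ) : ∃ ψ : β → ℝ, μ[Z | mβ.comap K] = ψ ∘ K :=
  let ⟨ψ, _, hψ⟩ :=
    (stronglyMeasurable_condExp (m := mβ.comap K) (μ := μ) (f := Z)).exists_eq_measurable_comp
  ⟨ψ, hψ⟩

theorem integrable_ind [IsFiniteMeasure μ] {A : Set Ω} (hA : MeasurableSet A) :
    Integrable (ind A) μ :=
  (integrable_const (1 : ℝ)).indicator hA

theorem comp_eq_sum_smul_ind {K : Ω → H} {S : Finset H} (hKS : ∀ ω, K ω ∈ S) (φ : H → ℝ) :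
    φ ∘ K = ∑ s ∈ S, φ s • ind {ω | K ω ∈ ({s} : Set H)} := by
  classical
  funext ω
  rw [Finset.sum_apply, Finset.sum_eq_single_of_mem (K ω) (hKS ω)]
  · simp [ind]
  · intro s _ hs
    simp [ind, Ne.symm hs]

theorem condExp_comp_ae_eq_of_condExp_ind_ae_eq [IsFiniteMeasure μ] [MeasurableSpace H]
    [MeasurableSingletonClass H] {K : Ω → H} (hK : Measurable K) (hfin : (Set.range K).Finite)
    (hind : ∀ s : H, μ[ind {ω | K ω ∈ ({s} : Set H)} | m₁]
      =ᵐ[μ] μ[ind {ω | K ω ∈ ({s} : Set H)} | m₂]) (φ : H → ℝ) :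
    μ[φ ∘ K | m₁] =ᵐ[μ] μ[φ ∘ K | m₂] := by
  have hint : ∀ s ∈ hfin.toFinset, Integrable (φ s • ind {ω | K ω ∈ ({s} : Set H)}) μ :=
    fun s _ => (integrable_ind (hK (measurableSet_singleton s))).smul (φ s)
  rw [comp_eq_sum_smul_ind (S := hfin.toFinset) (by simp)]
  refine (condExp_finsetSum hint m₁).trans (.trans ?_ (condExp_finsetSum hint m₂).symm)
  refine eventuallyEq_sum fun s _ => ?_
  exact (condExp_smul _ _ _).trans (((hind s).const_smul (φ s)).trans (condExp_smul _ _ _).symm)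

end

theorem transition_consistency_middle_step_general
    {Ω 𝒳 H : Type*}
    [MeasurableSpace Ω] [MeasurableSpace 𝒳]
    [Fintype 𝒳]
    [MeasurableSpace H] [StandardBorelSpace H]
    (μ : Measure Ω) [IsProbabilityMeasure μ]
    (T : ℕ)
    (X : ℕ → Ω → 𝒳) (hX : ∀ t, Measurable (X t))
    (h : ℕ → Ω → H) (g : (t : ℕ) → (Fin t → 𝒳) → H)
    (hg : ∀ t, 1 ≤ t → t ≤ T → Measurable (g t))
    (hgh : ∀ t, 1 ≤ t → t ≤ T → ∀ ω, h t ω = g t (tup X 0 t ω))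
    (k : ℕ) (hk1 : 1 ≤ k) (hk2 : k ≤ T - 2)
    -- `h (k+1)` is a belief state for `X_{1:k+1}`
    (hIH : ∀ f : (Fin (T - (k + 1)) → 𝒳) → ℝ, Measurable f → (∃ C, ∀ y, |f y| ≤ C) →
      (μ[fun ω => f (tup X (k + 1) (T - (k + 1)) ω) |
          MeasurableSpace.comap (h (k + 1)) inferInstance])
        =ᵐ[μ]
      (μ[fun ω => f (tup X (k + 1) (T - (k + 1)) ω) |
          MeasurableSpace.comap (tup X 0 (k + 1)) inferInstance]))
    -- transition consistency at time `k`
    (htrans : ∀ B : Set H, MeasurableSet B →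
      (μ[ind {ω | h (k + 1) ω ∈ B} |
          MeasurableSpace.comap (fun ω => (h k ω, X (k + 1) ω)) inferInstance])
        =ᵐ[μ]
      (μ[ind {ω | h (k + 1) ω ∈ B} |
          MeasurableSpace.comap (tup X 0 (k + 1)) inferInstance])) :
    -- conclusion
    ∀ f : (Fin (T - (k + 1)) → 𝒳) → ℝ, Measurable f → (∃ C, ∀ y, |f y| ≤ C) →
      (μ[fun ω => f (tup X (k + 1) (T - (k + 1)) ω) |
          MeasurableSpace.comap (fun ω => (h k ω, X (k + 1) ω)) inferInstance])
        =ᵐ[μ]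
      (μ[fun ω => f (tup X (k + 1) (T - (k + 1)) ω) |
          MeasurableSpace.comap (tup X 0 (k + 1)) inferInstance]) := by
  intro f hf hbdd
  have hF := measurable_tup hX 0 (k + 1)
  have hK : h (k + 1) = g (k + 1) ∘ tup X 0 (k + 1) :=
    funext (hgh (k + 1) (by omega) (by omega))
  have hKm : Measurable (h (k + 1)) := hK ▸ (hg (k + 1) (by omega) (by omega)).comp hF
  have hG : (fun ω => (h k ω, X (k + 1) ω))
      = (fun x => (g k (Fin.init x), x (Fin.last k))) ∘ tup X 0 (k + 1) := by
    funext ω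
    rw [Function.comp_apply, hgh k hk1 (by omega) ω]
    exact Prod.ext rfl (congrArg (X · ω) (by simp [add_comm]))
  have hφ : Measurable fun x : Fin (k + 1) → 𝒳 => (g k (Fin.init x), x (Fin.last k)) :=
    ((hg k hk1 (by omega)).comp (measurable_pi_lambda _ fun i => measurable_pi_apply _)).prodMk
      (measurable_pi_apply _)
  have hGF := MeasurableSpace.comap_le_comap_of_eq_comp _ hφ hG
  obtain ⟨ψ, hψ⟩ := exists_condExp_comap_eq_comp μ (h (k + 1))
    (fun ω => f (tup X (k + 1) (T - (k + 1)) ω))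
  have hfin : (Set.range (h (k + 1))).Finite :=
    (Set.finite_range (g (k + 1))).subset (hK ▸ Set.range_comp_subset_range _ _)
  refine condExp_ae_eq_condExp_of_le_of_ae_eq hGF hF.comap_le
    ((hIH f hf hbdd).symm.trans (.of_eq hψ)) ?_
  exact condExp_comp_ae_eq_of_condExp_ind_ae_eq hKm hfin (fun s => htrans {s} (measurableSet_singleton s)) ψ

/-- Fix `1 ≤ k ≤ T-2`. If `h (k+1)` is a belief state for `X_{1:k+1}` and
transition consistency holds at time `k`, then for every bounded measurable
`f : 𝒳^{T-k-1} → ℝ`, `E[f(X_{k+2:T}) ∣ σ(h_k, X_{k+1})] = E[f(X_{k+2:T}) ∣ σ(X_{1:k+1})]`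
μ-a.s. -/
theorem transition_consistency_middle_step
    {Ω 𝒳 H : Type*}
    [MeasurableSpace Ω] [MeasurableSpace 𝒳] [DiscreteMeasurableSpace 𝒳]
    [Fintype 𝒳] [Nonempty 𝒳]
    [MeasurableSpace H] [StandardBorelSpace H]
    (μ : Measure Ω) [IsProbabilityMeasure μ]
    (T : ℕ) (hT : 2 ≤ T)
    (X : ℕ → Ω → 𝒳) (hX : ∀ t, Measurable (X t))
    (h : ℕ → Ω → H) (g : (t : ℕ) → (Fin t → 𝒳) → H)
    (hg : ∀ t, 1 ≤ t → t ≤ T → Measurable (g t))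
    (hgh : ∀ t, 1 ≤ t → t ≤ T → ∀ ω, h t ω = g t (tup X 0 t ω))
    (k : ℕ) (hk1 : 1 ≤ k) (hk2 : k ≤ T - 2)
    -- `h (k+1)` is a belief state for `X_{1:k+1}`
    (hIH : ∀ f : (Fin (T - (k + 1)) → 𝒳) → ℝ, Measurable f → (∃ C, ∀ y, |f y| ≤ C) →
      (μ[fun ω => f (tup X (k + 1) (T - (k + 1)) ω) |
          MeasurableSpace.comap (h (k + 1)) inferInstance])
        =ᵐ[μ]
      (μ[fun ω => f (tup X (k + 1) (T - (k + 1)) ω) |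
          MeasurableSpace.comap (tup X 0 (k + 1)) inferInstance]))
    -- transition consistency at time `k`
    (htrans : ∀ B : Set H, MeasurableSet B →
      (μ[ind {ω | h (k + 1) ω ∈ B} |
          MeasurableSpace.comap (fun ω => (h k ω, X (k + 1) ω)) inferInstance])
        =ᵐ[μ]
      (μ[ind {ω | h (k + 1) ω ∈ B} |
          MeasurableSpace.comap (tup X 0 (k + 1)) inferInstance])) :
    -- conclusion
    ∀ f : (Fin (T - (k + 1)) → 𝒳) → ℝ, Measurable f → (∃ C, ∀ y, |f y| ≤ C) →
      (μ[fun ω => f (tup X (k + 1) (T - (k + 1)) ω) |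
          MeasurableSpace.comap (fun ω => (h k ω, X (k + 1) ω)) inferInstance])
        =ᵐ[μ]
      (μ[fun ω => f (tup X (k + 1) (T - (k + 1)) ω) |
          MeasurableSpace.comap (tup X 0 (k + 1)) inferInstance]) :=
  transition_consistency_middle_step_general μ T X hX h g hg hgh k hk1 hk2 hIH htrans
end
end

section
/- Let k ≥ 1 and let t satisfy 1 ≤ t and t + k ≤ T. If the system is k-observable at time t, then there exists a Borel-measurable function G : [0,1]^{𝒳^k} → [0,1]^{𝒳^{T−t}} such that μ-almost surely, (μ[X_{t+1:T} = w' ∣ σ(X_{1:t})])_{w' ∈ 𝒳^{T−t}} = G((μ[X_{t+1:t+k} = w ∣ σ(X_{1:t})])_{w ∈ 𝒳^k}); that is, the full-horizon conditional distribution of the future tokens given the history is a measurable function of the joint conditional distribution of the next k tokens given the history. -/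
/-!
The history `X_{1:t}` takes finitely many values, so `σ(X_{1:t})` is generated by the finite
partition into histories. On a history of positive probability, conditional expectations given
`σ(X_{1:t})` are the elementary conditional probabilities given that history, and almost every
`ω` lies on such a history. Observability says that, on positive-probability histories, the
full-horizon law is a function of the next-`k` law; since there are finitely many histories,
this function can be extended to a measurable `G` that is constant off a finite set.
-/

open MeasureTheory ProbabilityTheory

noncomputable section

open Function

lemma measurable_extend_of_finite {α β γ : Type*} [Finite α] [MeasurableSpace β]
    [MeasurableSingletonClass β] [MeasurableSpace γ] (f : α → β) (g : α → γ) {e : β → γ}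
    (he : Measurable e) : Measurable (extend f g e) := by
  have : Finite (Set.range f) := Set.finite_range f
  refine measurable_of_restrict_of_restrict_compl (Set.finite_range f).measurableSet
    (measurable_of_countable _) ?_
  convert he.comp measurable_subtype_coe using 1
  funext ⟨b, hb⟩
  exact extend_apply' g e b hb

section Fibers

variable {Ω α : Type*} [MeasurableSpace Ω] [MeasurableSpace α] [MeasurableSingletonClass α]
  {μ : Measure Ω} {f : Ω → α}

lemma ae_measure_preimage_singleton_ne_zero [Countable α] (hf : Measurable f) :
    ∀ᵐ ω ∂μ, μ (f ⁻¹' {f ω}) ≠ 0 := by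
  have h : ∀ᵐ a ∂μ.map f, μ.map f {a} ≠ 0 := ae_iff_of_countable.2 fun _ ha => ha
  filter_upwards [ae_of_ae_map hf.aemeasurable h] with ω hω
  rwa [Measure.map_apply hf (measurableSet_singleton _)] at hω

lemma condExp_indicator_comap_apply [IsFiniteMeasure μ] (hf : Measurable f) {A : Set Ω}
    (hA : MeasurableSet A) {ω : Ω} (hω : μ (f ⁻¹' {f ω}) ≠ 0) :
    μ[A.indicator 1 | MeasurableSpace.comap f inferInstance] ω = μ[|f ⁻¹' {f ω}].real A := by
  set s := f ⁻¹' {f ω}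
  set g := μ[A.indicator (1 : Ω → ℝ) | MeasurableSpace.comap f inferInstance]
  have hs : MeasurableSet s := hf (measurableSet_singleton _)
  have hg_const : ∀ y ∈ s, g y = g ω := fun y hy =>
    stronglyMeasurable_condExp.factorsThrough hy
  have h_int : μ.real s * g ω = μ.real (s ∩ A) := calc
    μ.real s * g ω = ∫ y in s, g y ∂μ := by
      rw [setIntegral_congr_fun hs hg_const, setIntegral_const, smul_eq_mul]
    _ = ∫ y in s, A.indicator 1 y ∂μ :=
      setIntegral_condExp hf.comap_le ((integrable_const 1).indicator hA)
        ⟨{f ω}, measurableSet_singleton _, rfl⟩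
    _ = μ.real (s ∩ A) := by
      rw [setIntegral_indicator hA]
      simp
  have h_cond : μ[|s].real A = (μ.real s)⁻¹ * μ.real (s ∩ A) := by
    simp [measureReal_def, cond_apply hs]
  have hs_pos : μ.real s ≠ 0 := (measureReal_ne_zero_iff).2 hω
  rw [h_cond, ← h_int]
  field_simp

end Fibers

theorem k_observable_full_horizon_factorization_general
    {Ω 𝒳 : Type*}
    [MeasurableSpace Ω] [MeasurableSpace 𝒳] [DiscreteMeasurableSpace 𝒳]
    [Fintype 𝒳]
    (μ : Measure Ω) [IsProbabilityMeasure μ]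
    (T : ℕ)
    (X : ℕ → Ω → 𝒳) (hX : ∀ t, Measurable (X t))
    (k : ℕ) (t : ℕ)
    -- the system is `k`-observable at time `t`
    (hobs : ∀ x x' : Fin t → 𝒳,
      0 < μ {ω | tup X 0 t ω = x} → 0 < μ {ω | tup X 0 t ω = x'} →
      (∀ w : Fin k → 𝒳,
        ProbabilityTheory.cond μ {ω | tup X 0 t ω = x} {ω | tup X t k ω = w} =
        ProbabilityTheory.cond μ {ω | tup X 0 t ω = x'} {ω | tup X t k ω = w}) →
      ∀ w' : Fin (T - t) → 𝒳,
        ProbabilityTheory.cond μ {ω | tup X 0 t ω = x} {ω | tup X t (T - t) ω = w'} =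
        ProbabilityTheory.cond μ {ω | tup X 0 t ω = x'} {ω | tup X t (T - t) ω = w'}) :
    -- conclusion: the full-horizon conditional is a measurable function of the next-`k`
    -- joint conditional
    ∃ G : ((Fin k → 𝒳) → ℝ) → ((Fin (T - t) → 𝒳) → ℝ), Measurable G ∧
      ∀ᵐ ω ∂μ,
        (fun w' : Fin (T - t) → 𝒳 =>
          (μ[ind {ω' | tup X t (T - t) ω' = w'} |
              MeasurableSpace.comap (tup X 0 t) inferInstance]) ω)
        =
        G (fun w : Fin k → 𝒳 =>
          (μ[ind {ω' | tup X t k ω' = w} |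
              MeasurableSpace.comap (tup X 0 t) inferInstance]) ω) := by
  have htup : ∀ s n, Measurable (tup X s n) := fun s n => measurable_pi_lambda _ fun _ => hX _
  let law : ∀ n, (Fin t → 𝒳) → (Fin n → 𝒳) → ℝ := fun n x w =>
    μ[|{ω | tup X 0 t ω = x}].real {ω | tup X t n ω = w}
  let PosHistory := {x : Fin t → 𝒳 // μ {ω | tup X 0 t ω = x} ≠ 0}
  have hfac : FactorsThrough (fun x : PosHistory => law (T - t) x) (fun x => law k x) := by
    intro x x' hxx'
    funext w'
    exact (measureReal_eq_measureReal_iff).2 (hobs x x' (pos_iff_ne_zero.2 x.2)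
      (pos_iff_ne_zero.2 x'.2) (fun w => (measureReal_eq_measureReal_iff).1 (congrFun hxx' w)) w')
  refine ⟨extend (fun x : PosHistory => law k x) (fun x => law (T - t) x) 0,
    measurable_extend_of_finite _ _ measurable_const, ?_⟩
  filter_upwards [ae_measure_preimage_singleton_ne_zero (htup 0 t)] with ω hω
  have hcondExp : ∀ n (w : Fin n → 𝒳),
      μ[ind {ω' | tup X t n ω' = w} | MeasurableSpace.comap (tup X 0 t) inferInstance] ω =
        law n (tup X 0 t ω) w := fun n w =>
    condExp_indicator_comap_apply (htup 0 t) (htup t n (measurableSet_singleton w)) hω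
  simp only [hcondExp]
  exact (hfac.extend_apply 0 ⟨tup X 0 t ω, hω⟩).symm

/-- If the system is `k`-observable at time `t`, then there is a
Borel-measurable map `G` taking the joint conditional distribution of the next `k` tokens
given the history to the full-horizon conditional distribution of the future tokens given
the history, μ-almost surely. -/
theorem k_observable_full_horizon_factorization
    {Ω 𝒳 : Type*}
    [MeasurableSpace Ω] [MeasurableSpace 𝒳] [DiscreteMeasurableSpace 𝒳]
    [Fintype 𝒳] [Nonempty 𝒳]
    (μ : Measure Ω) [IsProbabilityMeasure μ]
    (T : ℕ) (hT : 2 ≤ T)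
    (X : ℕ → Ω → 𝒳) (hX : ∀ t, Measurable (X t))
    (k : ℕ) (hk : 1 ≤ k) (t : ℕ) (ht1 : 1 ≤ t) (htk : t + k ≤ T)
    -- the system is `k`-observable at time `t`
    (hobs : ∀ x x' : Fin t → 𝒳,
      0 < μ {ω | tup X 0 t ω = x} → 0 < μ {ω | tup X 0 t ω = x'} →
      (∀ w : Fin k → 𝒳,
        ProbabilityTheory.cond μ {ω | tup X 0 t ω = x} {ω | tup X t k ω = w} =
        ProbabilityTheory.cond μ {ω | tup X 0 t ω = x'} {ω | tup X t k ω = w}) →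
      ∀ w' : Fin (T - t) → 𝒳,
        ProbabilityTheory.cond μ {ω | tup X 0 t ω = x} {ω | tup X t (T - t) ω = w'} =
        ProbabilityTheory.cond μ {ω | tup X 0 t ω = x'} {ω | tup X t (T - t) ω = w'}) :
    -- conclusion: the full-horizon conditional is a measurable function of the next-`k`
    -- joint conditional
    ∃ G : ((Fin k → 𝒳) → ℝ) → ((Fin (T - t) → 𝒳) → ℝ), Measurable G ∧
      ∀ᵐ ω ∂μ,
        (fun w' : Fin (T - t) → 𝒳 =>
          (μ[ind {ω' | tup X t (T - t) ω' = w'} |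
              MeasurableSpace.comap (tup X 0 t) inferInstance]) ω)
        =
        G (fun w : Fin k → 𝒳 =>
          (μ[ind {ω' | tup X t k ω' = w} |
              MeasurableSpace.comap (tup X 0 t) inferInstance]) ω) :=
  k_observable_full_horizon_factorization_general μ T X hX k t hobs
end
end
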